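/- arXiv:2405.11648 — 2 statements merged into one kernel-verified Lean document; each statement's English description precedes it below -/
import Mathlib

section
/- Let (X,G) be a complete G-metric space with at least 3 elements, and let T : X → X be a mapping such that (I) for all x ∈ X, if Tx ≠ x then T(Tx) ≠ x, and (II) there exists a constant λ ∈ (0,1/3) such that G(Tx,Ty,Tz) ≤ λ·[G(x,Tx,Tx) + G(y,Ty,Ty) + G(z,Tz,Tz)] for all pairwise distinct points x, y, z ∈ X. Then T has at least one fixed point, and T has at most two fixed points. -/
/-!
Along an orbit `xₙ = Tⁿ x₀` of a map without fixed points, condition (I) makes `xₙ, xₙ₊₁, xₙ₊₂`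
pairwise distinct, so the Kannan condition bounds `dₙ₊₂ = G(xₙ₊₂, xₙ₊₃, xₙ₊₃)` by
`λ / (1 - λ) · (dₙ + dₙ₊₁)`. As `2λ / (1 - λ) < 1` the series `∑ dₙ` converges, the orbit is
`G`-Cauchy, and applying the Kannan condition to `xₙ, xₙ₊₁` and the limit `u` gives
`G(u, Tu, Tu) ≤ λ G(u, Tu, Tu)`, i.e. `Tu = u`. Three distinct fixed points would have
`G`-distance at most `λ · 0`.
-/

open Filter

/-- A G-metric on `X` in the sense of Mustafa and Sims: (P1) `G x y z = 0` iff `x = y = z`;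
(P2) `G x x y > 0` if `x ≠ y`; (P3) invariance under all permutations of the arguments
(generated by the two swaps below); (P4) `G x x y ≤ G x y z` if `y ≠ z`;
(P5) `G x y z ≤ G x w w + G w y z`. The codomain is `[0, ∞)`, encoded by `nonneg`. -/
structure IsGMetric {X : Type*} (G : X → X → X → ℝ) : Prop where
  nonneg : ∀ x y z, 0 ≤ G x y z
  eq_zero_iff : ∀ x y z, G x y z = 0 ↔ x = y ∧ y = z
  pos_of_ne : ∀ x y, x ≠ y → 0 < G x x y
  swap_left : ∀ x y z, G x y z = G y x z
  swap_right : ∀ x y z, G x y z = G x z y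
  le_of_ne : ∀ x y z, y ≠ z → G x x y ≤ G x y z
  triangle : ∀ x y z w, G x y z ≤ G x w w + G w y z

/-- A sequence `u` is `G`-Cauchy if `G (u n) (u m) (u m) → 0` as `n, m → ∞`. -/
def GCauchy {X : Type*} (G : X → X → X → ℝ) (u : ℕ → X) : Prop :=
  Tendsto (fun p : ℕ × ℕ => G (u p.1) (u p.2) (u p.2)) atTop (nhds 0)

/-- A sequence `u` is `G`-convergent to `x` if `G (u n) x x → 0` as `n → ∞`. -/
def GConvergent {X : Type*} (G : X → X → X → ℝ) (u : ℕ → X) (x : X) : Prop :=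
  Tendsto (fun n => G (u n) x x) atTop (nhds 0)

/-- `(X, G)` is complete if every `G`-Cauchy sequence is `G`-convergent to some point. -/
def GComplete {X : Type*} (G : X → X → X → ℝ) : Prop :=
  ∀ u : ℕ → X, GCauchy G u → ∃ x, GConvergent G u x

open Topology Finset

def IsGKannanMap {X : Type*} (G : X → X → X → ℝ) (lam : ℝ) (T : X → X) : Prop :=
  ∀ x y z : X, x ≠ y → x ≠ z → y ≠ z →
    G (T x) (T y) (T z) ≤ lam * (G x (T x) (T x) + G y (T y) (T y) + G z (T z) (T z))

namespace IsGMetric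

variable {X : Type*} {G : X → X → X → ℝ}

theorem rotate (hG : IsGMetric G) (x y z : X) : G x y z = G y z x :=
  (hG.swap_left x y z).trans (hG.swap_right y x z)

theorem self_eq_zero (hG : IsGMetric G) (x : X) : G x x x = 0 :=
  (hG.eq_zero_iff x x x).mpr ⟨rfl, rfl⟩

theorem pos_of_ne' (hG : IsGMetric G) {x y : X} (h : x ≠ y) : 0 < G x y y := by
  rw [hG.rotate]
  exact hG.pos_of_ne y x h.symm

theorem le_two_mul (hG : IsGMetric G) (x y : X) : G x y y ≤ 2 * G y x x := by
  have h := hG.triangle y y x x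
  rw [← hG.rotate x y y, hG.rotate x y x] at h
  linarith

theorem le_of_ne_left (hG : IsGMetric G) {x y : X} (z : X) (h : x ≠ y) :
    G y z z ≤ G x y z := by
  calc G y z z = G z z y := hG.rotate y z z
    _ ≤ G z y x := hG.le_of_ne z y x h.symm
    _ = G x y z := by rw [hG.swap_left, hG.swap_right, hG.swap_left]

theorem le_sum_range (hG : IsGMetric G) (x : ℕ → X) (m k : ℕ) :
    G (x m) (x (k + m)) (x (k + m)) ≤
      ∑ j ∈ range k, G (x (j + m)) (x (j + m + 1)) (x (j + m + 1)) := by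
  induction k with
  | zero => simp [hG.self_eq_zero]
  | succ k ih =>
    rw [sum_range_succ, Nat.add_right_comm k 1 m]
    linarith [hG.triangle (x m) (x (k + m + 1)) (x (k + m + 1)) (x (k + m))]

theorem gCauchy_of_summable (hG : IsGMetric G) {x : ℕ → X}
    (hx : Summable fun n => G (x n) (x (n + 1)) (x (n + 1))) : GCauchy G x := by
  set d := fun n => G (x n) (x (n + 1)) (x (n + 1))
  set tail := fun n => ∑' k, d (k + n)
  have htail_nonneg : ∀ n, 0 ≤ tail n := fun n => tsum_nonneg fun k => hG.nonneg _ _ _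
  have hle_tail : ∀ n m, n ≤ m → G (x n) (x m) (x m) ≤ tail n := by
    intro n m hnm
    obtain ⟨k, rfl⟩ := Nat.exists_eq_add_of_le' hnm
    exact (hG.le_sum_range x n k).trans <| ((summable_nat_add_iff n).mpr hx).sum_le_tsum
      (range k) fun _ _ => hG.nonneg _ _ _
  have hle : ∀ n m, G (x n) (x m) (x m) ≤ 2 * (tail n + tail m) := by
    intro n m
    rcases le_total n m with h | h
    · linarith [hle_tail n m h, htail_nonneg n, htail_nonneg m]
    · linarith [hG.le_two_mul (x n) (x m), hle_tail m n h, htail_nonneg n]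
  have htail : Tendsto tail atTop (𝓝 0) := tendsto_sum_nat_add d
  have hbound : Tendsto (fun p : ℕ × ℕ => 2 * (tail p.1 + tail p.2)) atTop (𝓝 0) := by
    rw [← prod_atTop_atTop_eq]
    simpa using ((htail.comp tendsto_fst).add (htail.comp tendsto_snd)).const_mul 2
  exact squeeze_zero (fun _ => hG.nonneg _ _ _) (fun p => hle p.1 p.2) hbound

end IsGMetric

/-- Summing the recursion over `n < N` bounds the partial sums by `a (d₀ + d₁) / (a - 2b)`. -/
theorem summable_of_mul_le_mul_add {d : ℕ → ℝ} {a b : ℝ} (hd : ∀ n, 0 ≤ d n) (hb : 0 ≤ b)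
    (hab : 2 * b < a) (h : ∀ n, a * d (n + 2) ≤ b * (d n + d (n + 1))) : Summable d := by
  have hpartial : ∀ N, ∑ i ∈ range (N + 2), d i ≤ a * (d 0 + d 1) / (a - 2 * b) := by
    intro N
    set P := ∑ i ∈ range (N + 2), d i
    have hsplit : P = ∑ i ∈ range N, d (i + 2) + d 1 + d 0 := by
      simp only [P, sum_range_succ']
    have hmono : ∀ M ≤ N + 2, ∑ i ∈ range M, d i ≤ P := fun M hM =>
      sum_le_sum_of_subset_of_nonneg (range_mono hM) fun i _ _ => hd i
    have hshift : ∑ i ∈ range N, d (i + 1) ≤ P := by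
      have := hmono (N + 1) (by omega)
      rw [sum_range_succ'] at this
      linarith [hd 0]
    have hrec : a * ∑ i ∈ range N, d (i + 2) ≤
        b * (∑ i ∈ range N, d i + ∑ i ∈ range N, d (i + 1)) := by
      rw [mul_sum, ← sum_add_distrib, mul_sum]
      exact sum_le_sum fun i _ => h i
    have hrecP : b * (∑ i ∈ range N, d i + ∑ i ∈ range N, d (i + 1)) ≤ b * (2 * P) := by
      gcongr
      linarith [hmono N (by omega)]
    rw [le_div_iff₀ (by linarith)]
    nlinarith
  refine summable_of_sum_range_le (c := a * (d 0 + d 1) / (a - 2 * b)) hd fun N => ?_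
  exact (sum_le_sum_of_subset_of_nonneg (range_mono (by omega)) fun i _ _ => hd i).trans
    (hpartial N)

namespace IsGKannanMap

variable {X : Type*} {G : X → X → X → ℝ} {lam : ℝ} {T : X → X}

theorem one_sub_mul_le (hT : IsGKannanMap G lam T) (hG : IsGMetric G) {x : X}
    (h₀₁ : x ≠ T x) (h₀₂ : x ≠ T (T x)) (h₁₂ : T x ≠ T (T x)) :
    (1 - lam) * G (T (T x)) (T (T (T x))) (T (T (T x))) ≤
      lam * (G x (T x) (T x) + G (T x) (T (T x)) (T (T x))) := by
  have := (hG.le_of_ne_left (T (T (T x))) h₁₂).trans (hT x (T x) (T (T x)) h₀₁ h₀₂ h₁₂)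
  linarith

/-- Without fixed points the limit `u` of an orbit must differ from the orbit points `xₙ`
with `G(xₙ, xₙ₊₁, xₙ₊₁) < G(u, Tu, Tu)`, so the Kannan condition applies to `xₙ, xₙ₊₁, u`. -/
theorem apply_eq_of_gConvergent (hT : IsGKannanMap G lam T) (hG : IsGMetric G) (hlam : lam < 1)
    {x : ℕ → X} (hx : ∀ n, x (n + 1) = T (x n)) (hne : ∀ n, x n ≠ x (n + 1))
    (hd : Tendsto (fun n => G (x n) (x (n + 1)) (x (n + 1))) atTop (𝓝 0))
    {u : X} (hu : GConvergent G x u) : T u = u := by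
  by_contra hu_fix
  set c := G u (T u) (T u)
  have hc : 0 < c := hG.pos_of_ne' (Ne.symm hu_fix)
  have hsmall : ∀ᶠ n in atTop, G (x n) (x (n + 1)) (x (n + 1)) < c := hd.eventually (gt_mem_nhds hc)
  have hfar : ∀ᶠ n in atTop, x n ≠ u := hsmall.mono fun n hn hxu => by
    rw [hx, hxu] at hn
    exact lt_irrefl c hn
  have hbound : ∀ᶠ n in atTop, c ≤ G u (x (n + 2)) (x (n + 2)) +
      lam * (G (x n) (x (n + 1)) (x (n + 1)) + G (x (n + 1)) (x (n + 2)) (x (n + 2)) + c) := by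
    filter_upwards [hfar, (tendsto_add_atTop_nat 1).eventually hfar] with n h₀ h₁
    have hkannan := hT (x n) (x (n + 1)) u (hne n) h₀ h₁
    rw [← hx, ← hx] at hkannan
    linarith [hG.triangle u (T u) (T u) (x (n + 2)), hG.le_of_ne_left (T u) (hne (n + 1))]
  have hu' : Tendsto (fun n => G u (x n) (x n)) atTop (𝓝 0) := by
    refine squeeze_zero (fun _ => hG.nonneg _ _ _) (fun n => hG.le_two_mul u (x n)) ?_
    simpa using hu.const_mul 2
  have hlim : Tendsto (fun n => G u (x (n + 2)) (x (n + 2)) +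
      lam * (G (x n) (x (n + 1)) (x (n + 1)) + G (x (n + 1)) (x (n + 2)) (x (n + 2)) + c))
      atTop (𝓝 (0 + lam * (0 + 0 + c))) :=
    (hu'.comp (tendsto_add_atTop_nat 2)).add
      (((hd.add (hd.comp (tendsto_add_atTop_nat 1))).add tendsto_const_nhds).const_mul lam)
  have := ge_of_tendsto hlim hbound
  nlinarith

theorem exists_fixedPoint [Nonempty X] (hT : IsGKannanMap G lam T) (hG : IsGMetric G)
    (hcomp : GComplete G) (hlam₀ : 0 ≤ lam) (hlam : lam < 1 / 3)
    (hI : ∀ x : X, T x ≠ x → T (T x) ≠ x) : ∃ x : X, T x = x := by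
  by_contra! hfix
  obtain ⟨x₀⟩ := ‹Nonempty X›
  set x := fun n => T^[n] x₀
  have hx : ∀ n, x (n + 1) = T (x n) := fun n => Function.iterate_succ_apply' T n x₀
  have hne : ∀ n, x n ≠ x (n + 1) := fun n => by rw [hx]; exact (hfix _).symm
  have hsum : Summable fun n => G (x n) (x (n + 1)) (x (n + 1)) := by
    refine summable_of_mul_le_mul_add (a := 1 - lam) (fun _ => hG.nonneg _ _ _) hlam₀ (by linarith)
      fun n => ?_
    simpa only [hx] using hT.one_sub_mul_le hG ((hne n).trans_eq (hx n))
      (hI _ (hfix _)).symm (hfix _).symm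
  obtain ⟨u, hu⟩ := hcomp x (hG.gCauchy_of_summable hsum)
  exact hfix u (hT.apply_eq_of_gConvergent hG (by linarith) hx hne hsum.tendsto_atTop_zero hu)

theorem eq_or_eq_or_eq_of_isFixedPt (hT : IsGKannanMap G lam T) (hG : IsGMetric G) {x y z : X}
    (hx : T x = x) (hy : T y = y) (hz : T z = z) : x = y ∨ x = z ∨ y = z := by
  by_contra! h
  have hxyz := hT x y z h.1 h.2.1 h.2.2
  rw [hx, hy, hz, hG.self_eq_zero, hG.self_eq_zero, hG.self_eq_zero] at hxyz
  exact h.1 ((hG.eq_zero_iff x y z).mp (le_antisymm (by simpa using hxyz) (hG.nonneg x y z))).1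

end IsGKannanMap

theorem kannan_fixedPoint_GMetric_general {X : Type*} [Nonempty X] (G : X → X → X → ℝ)
    (hG : IsGMetric G) (hcomp : GComplete G)
    (T : X → X)
    (hI : ∀ x : X, T x ≠ x → T (T x) ≠ x)
    (hII : ∃ lam : ℝ, 0 < lam ∧ lam < 1 / 3 ∧
      ∀ x y z : X, x ≠ y → x ≠ z → y ≠ z →
        G (T x) (T y) (T z) ≤
          lam * (G x (T x) (T x) + G y (T y) (T y) + G z (T z) (T z))) :
    (∃ x : X, T x = x) ∧
      ∀ x y z : X, T x = x → T y = y → T z = z → x = y ∨ x = z ∨ y = z := by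
  obtain ⟨lam, hlam₀, hlam, hT⟩ := hII
  exact ⟨IsGKannanMap.exists_fixedPoint hT hG hcomp hlam₀.le hlam hI,
    fun _ _ _ => IsGKannanMap.eq_or_eq_or_eq_of_isFixedPt hT hG⟩

/-- Kannan fixed point theorem in G-metric spaces (Theorem 3.4). -/
theorem kannan_fixedPoint_GMetric {X : Type*} [Nonempty X] (G : X → X → X → ℝ)
    (hG : IsGMetric G) (hcomp : GComplete G)
    (hcard : ∃ a b c : X, a ≠ b ∧ a ≠ c ∧ b ≠ c)
    (T : X → X)
    (hI : ∀ x : X, T x ≠ x → T (T x) ≠ x)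
    (hII : ∃ lam : ℝ, 0 < lam ∧ lam < 1 / 3 ∧
      ∀ x y z : X, x ≠ y → x ≠ z → y ≠ z →
        G (T x) (T y) (T z) ≤
          lam * (G x (T x) (T x) + G y (T y) (T y) + G z (T z) (T z))) :
    (∃ x : X, T x = x) ∧
      ∀ x y z : X, T x = x → T y = y → T z = z → x = y ∨ x = z ∨ y = z :=
  kannan_fixedPoint_GMetric_general G hG hcomp T hI hII
end

section
/- Let (X,d) be a complete metric space with at least 3 elements and let T : X → X be a mapping such that (I) for all x ∈ X, if Tx ≠ x then T(Tx) ≠ x, and (II) there exist nonnegative constants a₁, a₂, a₃, a₄ with 0 < a₁ + a₂ + a₃ + a₄ < 1 such that d(Tx,Ty) + d(Ty,Tz) + d(Tx,Tz) ≤ a₁·d(x,Tx) + a₂·d(y,Ty) + a₃·d(z,Tz) + a₄·[d(x,y) + d(y,z) + d(x,z)] for all pairwise distinct points x, y, z ∈ X. Then T has at least one fixed point, and T has at most two fixed points. -/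
/-!
Along the orbit of a point that is never fixed, condition (I) makes any three consecutive
iterates pairwise distinct, so the contraction condition applies to them and shrinks the perimeter
of consecutive triangles by the factor `(a₁ + a₂ + a₄) / (1 - a₃) < 1`. The orbit is therefore
Cauchy; it is also injective since these perimeters strictly decrease, so eventually it avoids
its limit `x`, and the contraction condition applied to `(Tⁿx₀, Tⁿ⁺¹x₀, x)` gives in the limit
`d(x, Tx) ≤ a₃ d(x, Tx)`. Three distinct fixed points would form a triangle whose perimeter is at
most `a₄` times itself.
-/

open Filter Topology Function

section Perimeter

variable {X : Type*}

def perimeter [PseudoMetricSpace X] (x y z : X) : ℝ := dist x y + dist y z + dist x z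

section PseudoMetric

variable [PseudoMetricSpace X]

theorem dist_le_perimeter_left (x y z : X) : dist x y ≤ perimeter x y z := by
  unfold perimeter
  linarith [dist_nonneg (x := y) (y := z), dist_nonneg (x := x) (y := z)]

theorem dist_le_perimeter_right (x y z : X) : dist y z ≤ perimeter x y z := by
  unfold perimeter
  linarith [dist_nonneg (x := x) (y := y), dist_nonneg (x := x) (y := z)]

end PseudoMetric

theorem perimeter_pos [MetricSpace X] {x y : X} (h : x ≠ y) (z : X) : 0 < perimeter x y z :=
  (dist_pos.2 h).trans_le (dist_le_perimeter_left x y z)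

end Perimeter

section Reich

variable {X : Type*}

def IsReichPerimeterContraction [PseudoMetricSpace X] (T : X → X) (a₁ a₂ a₃ a₄ : ℝ) : Prop :=
  ∀ x y z : X, x ≠ y → x ≠ z → y ≠ z →
    perimeter (T x) (T y) (T z) ≤
      a₁ * dist x (T x) + a₂ * dist y (T y) + a₃ * dist z (T z) + a₄ * perimeter x y z

def orbitPerimeter [PseudoMetricSpace X] (T : X → X) (x : X) : ℝ :=
  perimeter x (T x) (T (T x))

section Orbit

variable [PseudoMetricSpace X] {T : X → X} {x₀ : X} {κ : ℝ}

theorem orbitPerimeter_iterate_le (hκ : 0 ≤ κ)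
    (hstep : ∀ n, orbitPerimeter T (T^[n + 1] x₀) ≤ κ * orbitPerimeter T (T^[n] x₀)) (n : ℕ) :
    orbitPerimeter T (T^[n] x₀) ≤ orbitPerimeter T x₀ * κ ^ n := by
  induction n with
  | zero => simp
  | succ n ih =>
    calc orbitPerimeter T (T^[n + 1] x₀) ≤ κ * orbitPerimeter T (T^[n] x₀) := hstep n
      _ ≤ κ * (orbitPerimeter T x₀ * κ ^ n) := mul_le_mul_of_nonneg_left ih hκ
      _ = orbitPerimeter T x₀ * κ ^ (n + 1) := by ring

theorem cauchySeq_iterate_of_orbitPerimeter_le (hκ₀ : 0 ≤ κ) (hκ₁ : κ < 1)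
    (hstep : ∀ n, orbitPerimeter T (T^[n + 1] x₀) ≤ κ * orbitPerimeter T (T^[n] x₀)) :
    CauchySeq fun n => T^[n] x₀ := by
  refine cauchySeq_of_le_geometric κ (orbitPerimeter T x₀) hκ₁ fun n => ?_
  rw [iterate_succ_apply']
  exact (dist_le_perimeter_left _ _ _).trans (orbitPerimeter_iterate_le hκ₀ hstep n)

end Orbit

theorem injective_iterate_of_orbitPerimeter_le [MetricSpace X] {T : X → X} {x₀ : X} {κ : ℝ}
    (hκ : κ < 1)
    (hstep : ∀ n, orbitPerimeter T (T^[n + 1] x₀) ≤ κ * orbitPerimeter T (T^[n] x₀))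
    (hx₀ : ∀ n, ¬IsFixedPt T (T^[n] x₀)) :
    Injective fun n => T^[n] x₀ := by
  have hanti : StrictAnti fun n => orbitPerimeter T (T^[n] x₀) := by
    refine strictAnti_nat_of_succ_lt fun n => (hstep n).trans_lt (mul_lt_of_lt_one_left ?_ hκ)
    exact perimeter_pos (Ne.symm (hx₀ n)) _
  exact Injective.of_comp (f := orbitPerimeter T) hanti.injective

namespace IsReichPerimeterContraction

variable {a₁ a₂ a₃ a₄ : ℝ}

theorem orbitPerimeter_apply_le [PseudoMetricSpace X] {T : X → X}
    (hT : IsReichPerimeterContraction T a₁ a₂ a₃ a₄)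
    (ha₁ : 0 ≤ a₁) (ha₂ : 0 ≤ a₂) (ha₃ : 0 ≤ a₃) (ha₃₁ : a₃ < 1) {x : X}
    (h₁ : T x ≠ x) (h₂ : T (T x) ≠ x) (h₃ : T (T x) ≠ T x) :
    orbitPerimeter T (T x) ≤ (a₁ + a₂ + a₄) / (1 - a₃) * orbitPerimeter T x := by
  have hcontr := hT x (T x) (T (T x)) h₁.symm h₂.symm h₃.symm
  have hd₁ := mul_le_mul_of_nonneg_left (dist_le_perimeter_left x (T x) (T (T x))) ha₁
  have hd₂ := mul_le_mul_of_nonneg_left (dist_le_perimeter_right x (T x) (T (T x))) ha₂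
  have hd₃ := mul_le_mul_of_nonneg_left
    (dist_le_perimeter_right (T x) (T (T x)) (T (T (T x)))) ha₃
  unfold orbitPerimeter
  rw [div_mul_eq_mul_div, le_div_iff₀ (by linarith)]
  linarith

theorem orbitPerimeter_iterate_succ_le [PseudoMetricSpace X] {T : X → X}
    (hT : IsReichPerimeterContraction T a₁ a₂ a₃ a₄)
    (ha₁ : 0 ≤ a₁) (ha₂ : 0 ≤ a₂) (ha₃ : 0 ≤ a₃) (ha₃₁ : a₃ < 1)
    (hI : ∀ x : X, T x ≠ x → T (T x) ≠ x) {x₀ : X} (hx₀ : ∀ n, ¬IsFixedPt T (T^[n] x₀))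
    (n : ℕ) :
    orbitPerimeter T (T^[n + 1] x₀) ≤ (a₁ + a₂ + a₄) / (1 - a₃) * orbitPerimeter T (T^[n] x₀) := by
  have hsucc := hx₀ (n + 1)
  rw [iterate_succ_apply'] at hsucc ⊢
  exact hT.orbitPerimeter_apply_le ha₁ ha₂ ha₃ ha₃₁ (hx₀ n) (hI _ (hx₀ n)) hsucc

variable [MetricSpace X] {T : X → X}

theorem isFixedPt_of_tendsto_iterate (hT : IsReichPerimeterContraction T a₁ a₂ a₃ a₄)
    (ha₃ : a₃ < 1) {x₀ x : X} (hx₀ : ∀ n, ¬IsFixedPt T (T^[n] x₀))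
    (hlim : Tendsto (fun n => T^[n] x₀) atTop (𝓝 x)) (hne : ∀ᶠ n in atTop, T^[n] x₀ ≠ x) :
    IsFixedPt T x := by
  set u : ℕ → X := fun n => T^[n] x₀
  have hu : ∀ n, u (n + 1) = T (u n) := fun n => iterate_succ_apply' T n x₀
  have hlim₁ : Tendsto (fun n => u (n + 1)) atTop (𝓝 x) := hlim.comp (tendsto_add_atTop_nat 1)
  have hlim₂ : Tendsto (fun n => u (n + 2)) atTop (𝓝 x) := hlim.comp (tendsto_add_atTop_nat 2)
  have hbound : ∀ᶠ n in atTop, dist (u (n + 2)) (T x) ≤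
      a₁ * dist (u n) (u (n + 1)) + a₂ * dist (u (n + 1)) (u (n + 2)) + a₃ * dist x (T x) +
        a₄ * perimeter (u n) (u (n + 1)) x := by
    filter_upwards [hne, (tendsto_add_atTop_nat 1).eventually hne] with n hn hn₁
    have hcontr := hT (u n) (u (n + 1)) x (by rw [hu]; exact Ne.symm (hx₀ n)) hn hn₁
    rw [← hu, ← hu] at hcontr
    exact (dist_le_perimeter_right _ _ _).trans hcontr
  have hRHS : Tendsto (fun n => a₁ * dist (u n) (u (n + 1)) + a₂ * dist (u (n + 1)) (u (n + 2)) +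
      a₃ * dist x (T x) + a₄ * perimeter (u n) (u (n + 1)) x) atTop (𝓝 (a₃ * dist x (T x))) := by
    have hper : Tendsto (fun n => perimeter (u n) (u (n + 1)) x) atTop (𝓝 (perimeter x x x)) :=
      ((hlim.dist hlim₁).add (hlim₁.dist tendsto_const_nhds)).add (hlim.dist tendsto_const_nhds)
    have hsum := ((((hlim.dist hlim₁).const_mul a₁).add ((hlim₁.dist hlim₂).const_mul a₂)).add
      (tendsto_const_nhds (x := a₃ * dist x (T x)))).add (hper.const_mul a₄)
    simpa [perimeter] using hsum
  have hle : dist x (T x) ≤ a₃ * dist x (T x) :=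
    le_of_tendsto_of_tendsto (hlim₂.dist tendsto_const_nhds) hRHS hbound
  have hzero : dist x (T x) ≤ 0 := by nlinarith [dist_nonneg (x := x) (y := T x)]
  exact (dist_le_zero.1 hzero).symm

theorem exists_isFixedPt [CompleteSpace X] [Nonempty X]
    (hT : IsReichPerimeterContraction T a₁ a₂ a₃ a₄)
    (ha₁ : 0 ≤ a₁) (ha₂ : 0 ≤ a₂) (ha₃ : 0 ≤ a₃) (ha₄ : 0 ≤ a₄) (hsum : a₁ + a₂ + a₃ + a₄ < 1)
    (hI : ∀ x : X, T x ≠ x → T (T x) ≠ x) :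
    ∃ x, IsFixedPt T x := by
  obtain ⟨x₀⟩ := ‹Nonempty X›
  by_cases hfix : ∃ n, IsFixedPt T (T^[n] x₀)
  · obtain ⟨n, hn⟩ := hfix
    exact ⟨_, hn⟩
  push Not at hfix
  have ha₃₁ : a₃ < 1 := by linarith
  have hstep := hT.orbitPerimeter_iterate_succ_le ha₁ ha₂ ha₃ ha₃₁ hI hfix
  have hκ₀ : 0 ≤ (a₁ + a₂ + a₄) / (1 - a₃) := div_nonneg (by linarith) (by linarith)
  have hκ₁ : (a₁ + a₂ + a₄) / (1 - a₃) < 1 := (div_lt_one (by linarith)).2 (by linarith)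
  obtain ⟨x, hlim⟩ := cauchySeq_tendsto_of_complete
    (cauchySeq_iterate_of_orbitPerimeter_le hκ₀ hκ₁ hstep)
  have hne : ∀ᶠ n in atTop, T^[n] x₀ ≠ x := by
    rw [← Nat.cofinite_eq_atTop]
    exact (injective_iterate_of_orbitPerimeter_le hκ₁ hstep hfix).tendsto_cofinite.eventually
      (eventually_cofinite_ne x)
  exact ⟨x, hT.isFixedPt_of_tendsto_iterate ha₃₁ hfix hlim hne⟩

theorem eq_or_eq_or_eq_of_isFixedPt (hT : IsReichPerimeterContraction T a₁ a₂ a₃ a₄)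
    (ha₄ : a₄ < 1) {x y z : X} (hx : IsFixedPt T x) (hy : IsFixedPt T y) (hz : IsFixedPt T z) :
    x = y ∨ x = z ∨ y = z := by
  by_contra! hdistinct
  obtain ⟨hxy, hxz, hyz⟩ := hdistinct
  have hcontr := hT x y z hxy hxz hyz
  rw [hx.eq, hy.eq, hz.eq] at hcontr
  simp only [dist_self, mul_zero, zero_add] at hcontr
  exact hcontr.not_gt (mul_lt_of_lt_one_left (perimeter_pos hxy z) ha₄)

end IsReichPerimeterContraction

end Reich

/-- Corollary 4.5 (sum form): Reich-type perimeter contraction in a complete metric space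
with at least 3 points. -/
theorem fixedPoint_reich_perimeters {X : Type*} [MetricSpace X] [CompleteSpace X]
    (hcard : ∃ a b c : X, a ≠ b ∧ a ≠ c ∧ b ≠ c)
    (T : X → X)
    (hI : ∀ x : X, T x ≠ x → T (T x) ≠ x)
    (hII : ∃ a₁ a₂ a₃ a₄ : ℝ, 0 ≤ a₁ ∧ 0 ≤ a₂ ∧ 0 ≤ a₃ ∧ 0 ≤ a₄ ∧
      0 < a₁ + a₂ + a₃ + a₄ ∧ a₁ + a₂ + a₃ + a₄ < 1 ∧
      ∀ x y z : X, x ≠ y → x ≠ z → y ≠ z →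
        dist (T x) (T y) + dist (T y) (T z) + dist (T x) (T z) ≤
          a₁ * dist x (T x) + a₂ * dist y (T y) + a₃ * dist z (T z) +
            a₄ * (dist x y + dist y z + dist x z)) :
    (∃ x : X, T x = x) ∧
      ∀ x y z : X, T x = x → T y = y → T z = z → x = y ∨ x = z ∨ y = z := by
  obtain ⟨a₁, a₂, a₃, a₄, ha₁, ha₂, ha₃, ha₄, -, hsum, hT⟩ := hII
  replace hT : IsReichPerimeterContraction T a₁ a₂ a₃ a₄ := hT
  obtain ⟨x₀, -⟩ := hcard
  have : Nonempty X := ⟨x₀⟩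
  exact ⟨hT.exists_isFixedPt ha₁ ha₂ ha₃ ha₄ hsum hI,
    fun x y z => hT.eq_or_eq_or_eq_of_isFixedPt (by linarith)⟩
end
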